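/- For every finite normative system N and finite input A, a propositional formula φ is in the basic reusable output out4(N,A) if and only if the finite basis B4(N,A) := B2(N, A ∪ m(N)) semantically entails φ. -/
import Mathlib


/-- Formulas of classical propositional logic over countably many atoms. -/
inductive PropForm : Type
  | atom : ℕ → PropForm
  | fls  : PropForm
  | neg  : PropForm → PropForm
  | conj : PropForm → PropForm → PropForm
  | disj : PropForm → PropForm → PropForm

/-- Truth of a formula under a valuation. -/
def PropForm.eval (v : ℕ → Prop) : PropForm → Prop
  | .atom n => v n
  | .fls => False
  | .neg p => ¬ PropForm.eval v p
  | .conj p q => PropForm.eval v p ∧ PropForm.eval v q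
  | .disj p q => PropForm.eval v p ∨ PropForm.eval v q

/-- Semantic consequence `A ⊢ φ`. -/
def Entails (A : Set PropForm) (φ : PropForm) : Prop :=
  ∀ v : ℕ → Prop, (∀ ψ ∈ A, ψ.eval v) → φ.eval v

/-- Propositional satisfiability of a set of formulas. -/
def Satisfiable (A : Set PropForm) : Prop :=
  ∃ v : ℕ → Prop, ∀ ψ ∈ A, ψ.eval v

/-- Consequence set `Cn(A)`. -/
def Cn (A : Set PropForm) : Set PropForm := {φ | Entails A φ}

/-- A conditional norm `(body, head)`. -/
abbrev IONorm := PropForm × PropForm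

/-- Image `N(A)` of a set of formulas under a normative system. -/
def img (N : Set IONorm) (A : Set PropForm) : Set PropForm :=
  {x | ∃ a ∈ A, (a, x) ∈ N}

/-- Heads of the norms of a normative system. -/
def heads (N : Set IONorm) : Set PropForm := {φ | ∃ n ∈ N, φ = n.2}

/-- `A` directly triggers norm `n`: `A ⊢ body(n)`. -/
def Trig (A : Set PropForm) (n : IONorm) : Prop := Entails A n.1

/-- Simple-minded output `out1(N,A) = Cn(N(Cn(A)))`. -/
def out1 (N : Set IONorm) (A : Set PropForm) : Set PropForm :=
  Cn (img N (Cn A))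

/-- A complete set: all of `L`, or maximally consistent. -/
def CompleteSet (V : Set PropForm) : Prop :=
  V = Set.univ ∨ (Satisfiable V ∧ ∀ W, V ⊆ W → Satisfiable W → W = V)

/-- Basic output `out2(N,A)`. -/
def out2 (N : Set IONorm) (A : Set PropForm) : Set PropForm :=
  ⋂ V ∈ {V : Set PropForm | A ⊆ V ∧ CompleteSet V}, Cn (img N V)

/-- Reusable output `out3(N,A)`. -/
def out3 (N : Set IONorm) (A : Set PropForm) : Set PropForm :=
  ⋂ B ∈ {B : Set PropForm | A ⊆ B ∧ B = Cn B ∧ img N B ⊆ B}, Cn (img N B)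

/-- Basic reusable output `out4(N,A)`. -/
def out4 (N : Set IONorm) (A : Set PropForm) : Set PropForm :=
  ⋂ V ∈ {V : Set PropForm | A ⊆ V ∧ img N V ⊆ V ∧ CompleteSet V}, Cn (img N V)

/-- Basis `B1(N,A)` of the simple-minded output. -/
def B1 (N : Set IONorm) (A : Set PropForm) : Set PropForm :=
  {φ | ∃ n ∈ N, Trig A n ∧ φ = n.2}

/-- Iterated bases `B3^i(N,A)`. -/
def B3i (N : Set IONorm) (A : Set PropForm) : ℕ → Set PropForm
  | 0 => B1 N A
  | i + 1 => B1 N (A ∪ B3i N A i)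

/-- `B3(N,A)`: the fixed point `B3^j(N,A)` for the least `j` with
`B3^j(N,A) = B3^{j+1}(N,A)`. -/
noncomputable def B3 (N : Set IONorm) (A : Set PropForm) : Set PropForm :=
  B3i N A (sInf {j | B3i N A j = B3i N A (j + 1)})

/-- Disjunction of the bodies of a finite set of norms. -/
noncomputable def bodyDisj (s : Finset IONorm) : PropForm :=
  (s.toList.map Prod.fst).foldr PropForm.disj PropForm.fls

/-- Weak output `wo(N')`: disjunction of the heads of a finite set of norms. -/
noncomputable def wo (s : Finset IONorm) : PropForm :=
  (s.toList.map Prod.snd).foldr PropForm.disj PropForm.fls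

/-- `A` weakly triggers `N'`: `A ⊢ ⋁_{n ∈ N'} body(n)`. -/
def WTrig (A : Set PropForm) (s : Finset IONorm) : Prop :=
  Entails A (bodyDisj s)

/-- `A` minimally weakly triggers `N'`. -/
def MinWTrig (A : Set PropForm) (s : Finset IONorm) : Prop :=
  WTrig A s ∧ ∀ t : Finset IONorm, t.Nonempty → t ⊂ s → ¬ WTrig A t

/-- Basis `B2(N,A)` of the basic output. -/
def B2 (N : Finset IONorm) (A : Set PropForm) : Set PropForm :=
  {φ | ∃ s : Finset IONorm, s.Nonempty ∧ s ⊆ N ∧ WTrig A s ∧ φ = wo s}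

/-- Materialization `m(N) = {¬a ∨ x | (a,x) ∈ N}`. -/
def mat (N : Set IONorm) : Set PropForm :=
  {φ | ∃ p ∈ N, φ = PropForm.disj (PropForm.neg p.1) p.2}

/-- The throughput norms `I = {(x,x) | x ∈ L}`. -/
def thruI : Set IONorm := {p | p.1 = p.2}

/-- Element-wise negation of the bodies of a finite set of norms. -/
def negBodies (N : Finset IONorm) : Set PropForm :=
  {φ | ∃ n ∈ N, φ = PropForm.neg n.1}

/-- `C'` is a minimal unsatisfiable subset (MUS) of `C`. -/
def IsMUS (C C' : Set PropForm) : Prop :=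
  C' ⊆ C ∧ ¬ Satisfiable C' ∧ ∀ C'' ⊂ C', Satisfiable C''

/-! ### Auxiliary lemmas -/

/-- The theory of a valuation. -/
def Th (w : ℕ → Prop) : Set PropForm := {ψ | ψ.eval w}

lemma completeSet_Th (w : ℕ → Prop) : CompleteSet (Th w) := by
  right
  refine ⟨⟨w, fun ψ h => h⟩, ?_⟩
  intro W hsub ⟨u, hu⟩
  refine Set.Subset.antisymm ?_ hsub
  intro ψ hψ
  by_contra hψw
  have : (PropForm.neg ψ).eval u := hu _ (hsub hψw)
  exact this (hu _ hψ)

lemma completeSet_cases {V : Set PropForm} (h : CompleteSet V) :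
    V = Set.univ ∨ ∃ w, V = Th w := by
  rcases h with h | ⟨⟨w, hw⟩, hmax⟩
  · exact Or.inl h
  · right
    refine ⟨w, (hmax (Th w) (fun ψ hψ => hw ψ hψ) ⟨w, fun ψ h => h⟩).symm⟩

lemma eval_foldr_disj (v : ℕ → Prop) (l : List PropForm) :
    (l.foldr PropForm.disj PropForm.fls).eval v ↔ ∃ p ∈ l, p.eval v := by
  induction l with
  | nil => simp [PropForm.eval]
  | cons a l ih => simp [PropForm.eval, ih]

lemma eval_wo (v : ℕ → Prop) (s : Finset IONorm) :
    (wo s).eval v ↔ ∃ n ∈ s, n.2.eval v := by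
  unfold wo
  rw [eval_foldr_disj]
  simp
  tauto

lemma eval_bodyDisj (v : ℕ → Prop) (s : Finset IONorm) :
    (bodyDisj s).eval v ↔ ∃ n ∈ s, n.1.eval v := by
  unfold bodyDisj
  rw [eval_foldr_disj]
  simp

/-- Characterization of `out4` membership over a finite normative system. -/
lemma out4_char (N : Finset IONorm) (A : Set PropForm) (φ : PropForm) :
    φ ∈ out4 ↑N A ↔
      (Entails (img ↑N Set.univ) φ ∧
        ∀ w : ℕ → Prop, (∀ ψ ∈ A, ψ.eval w) →
          (∀ n ∈ N, (n : IONorm).1.eval w → (n : IONorm).2.eval w) →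
          Entails (img ↑N (Th w)) φ) := by
  constructor
  · intro h
    have h' : ∀ V, A ⊆ V → img ↑N V ⊆ V → CompleteSet V → φ ∈ Cn (img ↑N V) := by
      intro V h1 h2 h3
      have := Set.mem_iInter₂.1 h V
      exact this ⟨h1, h2, h3⟩
    constructor
    · exact h' Set.univ (Set.subset_univ _) (Set.subset_univ _) (Or.inl rfl)
    · intro w hwA hwN
      refine h' (Th w) hwA ?_ (completeSet_Th w)
      rintro x ⟨a, ha, hax⟩
      exact hwN (a, x) hax ha
  · rintro ⟨h1, h2⟩
    refine Set.mem_iInter₂.2 ?_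
    rintro V ⟨hAV, hNV, hV⟩
    rcases completeSet_cases hV with rfl | ⟨w, rfl⟩
    · exact h1
    · refine h2 w (fun ψ hψ => hAV hψ) ?_
      intro n hn hw
      exact hNV ⟨n.1, hw, hn⟩

/-- For every finite normative system `N` and finite input `A`,
`φ ∈ out4(N,A)` iff the finite basis `B4(N,A) = B2(N, A ∪ m(N))` semantically
entails `φ`. -/
theorem out4_iff_basis_entails (N : Finset IONorm) (A : Set PropForm)
    (hA : A.Finite) (φ : PropForm) :
    φ ∈ out4 ↑N A ↔ Entails (B2 N (A ∪ mat ↑N)) φ := by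
  classical
  rw [out4_char]
  constructor
  · rintro ⟨h1, h2⟩ v hv
    -- `B'` : per-norm choice formulas
    set g : IONorm → PropForm := fun n =>
      if n.2.eval v then PropForm.disj (PropForm.neg n.1) n.2 else PropForm.neg n.1 with hg
    by_cases hsat : Satisfiable (A ∪ {ψ | ∃ n ∈ N, ψ = g n})
    · obtain ⟨w, hw⟩ := hsat
      have hwA : ∀ ψ ∈ A, ψ.eval w := fun ψ h => hw ψ (Or.inl h)
      have hwg : ∀ n ∈ N, (g n).eval w := fun n hn => hw _ (Or.inr ⟨n, hn, rfl⟩)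
      have hwN : ∀ n ∈ N, (n : IONorm).1.eval w → (n : IONorm).2.eval w := by
        intro n hn hwa
        have := hwg n hn
        by_cases hv2 : n.2.eval v
        · rw [hg] at this; simp only [hv2, if_pos] at this
          rcases this with h | h
          · exact absurd hwa h
          · exact h
        · rw [hg] at this; simp only [hv2, if_neg] at this
          exact absurd hwa this
      refine h2 w hwA hwN v ?_
      rintro x ⟨a, ha, hax⟩
      have := hwg (a, x) hax
      by_cases hv2 : PropForm.eval v x
      · exact hv2
      · rw [hg] at this
        simp only [hv2, if_neg, not_false_iff] at this
        exact absurd ha this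
    · -- unsatisfiable case
      set s : Finset IONorm := N.filter (fun n => ¬ n.2.eval v) with hs
      by_cases hne : s.Nonempty
      · exfalso
        have htrig : WTrig (A ∪ mat ↑N) s := by
          intro u hu
          by_contra hbd
          apply hsat
          refine ⟨u, ?_⟩
          rintro ψ (hψ | ⟨n, hn, rfl⟩)
          · exact hu ψ (Or.inl hψ)
          · by_cases hv2 : n.2.eval v
            · rw [hg]; simp only [hv2, if_pos]
              have : (PropForm.disj (PropForm.neg n.1) n.2).eval u :=
                hu _ (Or.inr ⟨n, hn, rfl⟩)
              exact this
            · rw [hg]; simp only [hv2, if_neg, not_false_iff]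
              intro hu1
              apply hbd
              rw [eval_bodyDisj]
              exact ⟨n, Finset.mem_filter.2 ⟨hn, hv2⟩, hu1⟩
        have : (wo s).eval v :=
          hv _ ⟨s, hne, Finset.filter_subset _ _, htrig, rfl⟩
        rw [eval_wo] at this
        obtain ⟨n, hns, hnv⟩ := this
        exact (Finset.mem_filter.1 hns).2 hnv
      · -- all heads true under v
        refine h1 v ?_
        rintro x ⟨a, _, hax⟩
        by_contra hx
        exact hne ⟨(a, x), Finset.mem_filter.2 ⟨hax, hx⟩⟩
  · intro hB
    constructor
    · intro v hv
      refine hB v ?_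
      rintro ψ ⟨s, ⟨n, hn⟩, hsub, htrig, rfl⟩
      rw [eval_wo]
      exact ⟨n, hn, hv n.2 ⟨n.1, Set.mem_univ _, hsub hn⟩⟩
    · intro w hwA hwN v hv
      refine hB v ?_
      rintro ψ ⟨s, _, hsub, htrig, rfl⟩
      have hwAm : ∀ ψ ∈ A ∪ mat ↑N, ψ.eval w := by
        rintro ψ (hψ | ⟨p, hp, rfl⟩)
        · exact hwA ψ hψ
        · show ¬ p.1.eval w ∨ p.2.eval w
          by_cases h : p.1.eval w
          · exact Or.inr (hwN p hp h)
          · exact Or.inl h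
      have := htrig w hwAm
      rw [eval_bodyDisj] at this
      obtain ⟨n, hns, hn1⟩ := this
      rw [eval_wo]
      exact ⟨n, hns, hv n.2 ⟨n.1, hn1, hsub hns⟩⟩
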